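/- Let 0 < q < 1, let a > 1 be an integer, and define f[x^a y; \theta] := \sum_{m=1}^\infty q^{am}/([m]_q^a([m]_q - \theta q^m)) and f[x^{a-1}y; \theta] := \sum_{m=1}^\infty q^{(a-1)m}/([m]_q^{a-1}([m]_q - \theta q^m)). Then for \theta with |\theta| < 1/q and \theta' := q\theta - 1, one has f[x^{a-1}y; \theta] - \theta f[x^a y; \theta] = f[x^{a-1}y; \theta'] - \theta' f[x^a y; \theta']. -/

import Mathlib

/-
With D_m(θ) = [m]_q - θ q^m, the m-th terms of f[x^{a-1}y; θ] - θ f[x^a y; θ] combine to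
q^{(a-1)m} D_m(θ) / ([m]_q^a D_m(θ)) = q^{(a-1)m} / [m]_q^a, so the left-hand side does not depend on θ.
Since [m]_q + q^m = [m+1]_q, one has D_m(qθ - 1) = D_{m+1}(θ), so for θ and θ' alike every denominator
D_m is at least 1 - q|θ| > 0; all series are then dominated by geometric ones, which justifies splitting
them termwise.
-/

noncomputable def qnum (q : ℝ) (k : ℕ) : ℝ := (1 - q ^ k) / (1 - q)

noncomputable def fser (q θ : ℝ) (a : ℕ) : ℝ :=
  ∑' m : ℕ+, q ^ (a * (m : ℕ)) /
    ((qnum q m) ^ a * (qnum q m - θ * q ^ (m : ℕ)))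

section QNumber

variable {q : ℝ}

lemma one_le_qnum (hq0 : 0 ≤ q) (hq1 : q < 1) {k : ℕ} (hk : 1 ≤ k) : 1 ≤ qnum q k := by
  rw [qnum, le_div_iff₀ (by linarith), one_mul]
  linarith [pow_le_of_le_one hq0 hq1.le (by omega : k ≠ 0)]

lemma qnum_succ (hq1 : q ≠ 1) (k : ℕ) : qnum q (k + 1) = qnum q k + q ^ k := by
  have : 1 - q ≠ 0 := sub_ne_zero.mpr hq1.symm
  unfold qnum
  field_simp
  ring

lemma qnum_sub_mul_pow_shift (hq1 : q ≠ 1) (θ : ℝ) (k : ℕ) :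
    qnum q k - (q * θ - 1) * q ^ k = qnum q (k + 1) - θ * q ^ (k + 1) := by
  rw [qnum_succ hq1]
  ring

lemma one_sub_mul_abs_le_qnum_sub_mul_pow (hq0 : 0 ≤ q) (hq1 : q < 1) (θ : ℝ) {k : ℕ}
    (hk : 1 ≤ k) : 1 - q * |θ| ≤ qnum q k - θ * q ^ k := by
  have hqk : q ^ k ≤ q := pow_le_of_le_one hq0 hq1.le (by omega)
  have : θ * q ^ k ≤ q * |θ| :=
    calc θ * q ^ k ≤ |θ| * q ^ k := mul_le_mul_of_nonneg_right (le_abs_self θ) (by positivity)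
      _ ≤ |θ| * q := mul_le_mul_of_nonneg_left hqk (abs_nonneg θ)
      _ = q * |θ| := mul_comm _ _
  linarith [one_le_qnum hq0 hq1 hk]

end QNumber

lemma summable_pnat_of_le_geometric {f : ℕ+ → ℝ} {C r : ℝ} (hr0 : 0 ≤ r) (hr1 : r < 1)
    (hf0 : ∀ m, 0 ≤ f m) (hf : ∀ m, f m ≤ C * r ^ (m : ℕ)) : Summable f :=
  (((summable_geometric_of_lt_one hr0 hr1).comp_injective PNat.coe_injective).mul_left C
    ).of_nonneg_of_le hf0 hf

lemma div_pow_mul_sub_sub_mul_div_pow_succ {K : Type*} [Field K] {s t N θ : K} (b : ℕ)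
    (hN : N ≠ 0) (hD : N - θ * t ≠ 0) :
    s / (N ^ b * (N - θ * t)) - θ * (s * t / (N ^ (b + 1) * (N - θ * t))) = s / N ^ (b + 1) := by
  field_simp
  ring

section Series

variable {q : ℝ} (hq0 : 0 ≤ q) (hq1 : q < 1)
include hq0 hq1

lemma summable_pow_mul_div_qnum_pow {b : ℕ} (hb : 1 ≤ b) (a : ℕ) :
    Summable fun m : ℕ+ => q ^ (b * (m : ℕ)) / qnum q m ^ a := by
  have hN (m : ℕ+) : 1 ≤ qnum q m ^ a := one_le_pow₀ (one_le_qnum hq0 hq1 m.pos)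
  refine summable_pnat_of_le_geometric (C := 1) (r := q ^ b) (by positivity)
    (pow_lt_one₀ hq0 hq1 (by omega)) (fun m => ?_) (fun m => ?_)
  · exact div_nonneg (by positivity) (zero_le_one.trans (hN m))
  · rw [one_mul, ← pow_mul]
    exact div_le_self (by positivity) (hN m)

lemma summable_fser_term {ψ c : ℝ} (hc : 0 < c) (hD : ∀ m : ℕ+, c ≤ qnum q m - ψ * q ^ (m : ℕ))
    {a : ℕ} (ha : 1 ≤ a) :
    Summable fun m : ℕ+ => q ^ (a * (m : ℕ)) / (qnum q m ^ a * (qnum q m - ψ * q ^ (m : ℕ))) := by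
  have hN (m : ℕ+) : 1 ≤ qnum q m ^ a := one_le_pow₀ (one_le_qnum hq0 hq1 m.pos)
  have hden (m : ℕ+) : c ≤ qnum q m ^ a * (qnum q m - ψ * q ^ (m : ℕ)) := by
    simpa using mul_le_mul (hN m) (hD m) hc.le (zero_le_one.trans (hN m))
  refine summable_pnat_of_le_geometric (C := c⁻¹) (r := q ^ a) (by positivity)
    (pow_lt_one₀ hq0 hq1 (by omega)) (fun m => div_nonneg (by positivity) ?_) (fun m => ?_)
  · exact hc.le.trans (hden m)
  · rw [← pow_mul, inv_mul_eq_div]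
    exact div_le_div_of_nonneg_left (by positivity) hc (hden m)

lemma fser_sub_mul_fser_succ {ψ c : ℝ} (hc : 0 < c)
    (hD : ∀ m : ℕ+, c ≤ qnum q m - ψ * q ^ (m : ℕ)) {b : ℕ} (hb : 1 ≤ b) :
    fser q ψ b - ψ * fser q ψ (b + 1) = ∑' m : ℕ+, q ^ (b * (m : ℕ)) / qnum q m ^ (b + 1) := by
  have hterm (m : ℕ+) : q ^ (b * (m : ℕ)) / (qnum q m ^ b * (qnum q m - ψ * q ^ (m : ℕ)))
      = ψ * (q ^ ((b + 1) * (m : ℕ)) / (qnum q m ^ (b + 1) * (qnum q m - ψ * q ^ (m : ℕ))))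
        + q ^ (b * (m : ℕ)) / qnum q m ^ (b + 1) := by
    rw [add_one_mul, pow_add]
    linear_combination div_pow_mul_sub_sub_mul_div_pow_succ (s := q ^ (b * (m : ℕ)))
      (t := q ^ (m : ℕ)) (N := qnum q m) (θ := ψ) b
      (by linarith [one_le_qnum hq0 hq1 m.pos]) (by linarith [hD m])
  rw [fser, tsum_congr hterm,
    ((summable_fser_term hq0 hq1 hc hD (by omega)).mul_left ψ).tsum_add
      (summable_pow_mul_div_qnum_pow hq0 hq1 hb _), tsum_mul_left, fser]
  ring

end Series

theorem fser_difference_equation (q θ : ℝ) (hq0 : 0 < q) (hq1 : q < 1)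
    (a : ℕ) (ha : 1 < a) (hθ : |θ| < 1 / q) :
    fser q θ (a - 1) - θ * fser q θ a
      = fser q (q * θ - 1) (a - 1) - (q * θ - 1) * fser q (q * θ - 1) a := by
  obtain ⟨b, rfl⟩ : ∃ b, a = b + 1 := ⟨a - 1, by omega⟩
  have hc : 0 < 1 - q * |θ| := by
    rw [lt_div_iff₀ hq0] at hθ
    linarith
  have hD : ∀ m : ℕ+, 1 - q * |θ| ≤ qnum q m - θ * q ^ (m : ℕ) := fun m =>
    one_sub_mul_abs_le_qnum_sub_mul_pow hq0.le hq1 θ m.pos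
  have hD' : ∀ m : ℕ+, 1 - q * |θ| ≤ qnum q m - (q * θ - 1) * q ^ (m : ℕ) := fun m => by
    rw [qnum_sub_mul_pow_shift hq1.ne]
    exact one_sub_mul_abs_le_qnum_sub_mul_pow hq0.le hq1 θ (by omega)
  rw [Nat.add_sub_cancel, fser_sub_mul_fser_succ hq0.le hq1 hc hD (by omega),
    fser_sub_mul_fser_succ hq0.le hq1 hc hD' (by omega)]
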